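/- arXiv:2409.15932 — 4 statements merged into one kernel-verified Lean document; each statement's English description precedes it below -/
import Mathlib

section
/- Let ϱ : ℝ² → ℝ be smooth and define the vector field Y = Y¹∂_x + Y²∂_y by Y¹ = ϱ(ϱ_yy ϱ_xxy − 2 ϱ_xy ϱ_xyy + ϱ_xx ϱ_yyy) and Y² = −ϱ(ϱ_yy ϱ_xxx − 2 ϱ_xy ϱ_xxy + ϱ_xx ϱ_xyy). Let H = 2(ϱ_xx ϱ_yy − ϱ_xy²). Then 2Y is the Hamiltonian vector field of H with respect to the Poisson bivector P = ϱ ∂_x ∧ ∂_y, i.e. at every point of ℝ², 2·Y¹ = ϱ · ∂_y H and 2·Y² = −ϱ · ∂_x H. (Hence the unique graph-vector-field solution of the homogeneous equation [[P,Y]] = 0 is a Hamiltonian vector field, so the corresponding homogeneous part of the first Lichnerowicz–Poisson cohomology of graph multivectors on ℝ² is trivial.) -/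
/-- The partial derivative `∂/∂xⁱ` of a function on `ℝ² ≃ (Fin 2 → ℝ)`,
with `x = x¹ ↔ i = 0` and `y = x² ↔ i = 1`. -/
noncomputable def pd (i : Fin 2) (f : (Fin 2 → ℝ) → ℝ) : (Fin 2 → ℝ) → ℝ :=
  fun x => fderiv ℝ f x (Pi.single i 1)

lemma pd_contDiff {f : (Fin 2 → ℝ) → ℝ} (hf : ContDiff ℝ (⊤ : ℕ∞) f) (i : Fin 2) :
    ContDiff ℝ (⊤ : ℕ∞) (pd i f) :=
  (hf.fderiv_right (by exact_mod_cast le_refl (⊤:ℕ∞))).clm_apply contDiff_const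

lemma pd_comm {f : (Fin 2 → ℝ) → ℝ} (hf : ContDiff ℝ (⊤ : ℕ∞) f) (i j : Fin 2) :
    pd i (pd j f) = pd j (pd i f) := by
  funext x
  have hd : Differentiable ℝ f := hf.differentiable (by simp)
  have hf' : ContDiff ℝ (⊤ : ℕ∞) (fderiv ℝ f) :=
    hf.fderiv_right (by exact_mod_cast le_refl (⊤:ℕ∞))
  have hdx : DifferentiableAt ℝ (fderiv ℝ f) x :=
    (hf'.differentiable (by simp)) x
  have hsym := second_derivative_symmetric (f := f) (f' := fderiv ℝ f)
    (f'' := fderiv ℝ (fderiv ℝ f) x) (fun y => (hd y).hasFDerivAt) hdx.hasFDerivAt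
  have key : ∀ (a b : Fin 2), pd a (pd b f) x =
      fderiv ℝ (fderiv ℝ f) x (Pi.single a 1) (Pi.single b 1) := by
    intro a b
    have : pd b f = fun y => (fderiv ℝ f y) (Pi.single b 1) := rfl
    rw [pd, this, fderiv_clm_apply hdx (differentiableAt_const _)]
    simp
  rw [key, key, hsym]

lemma pd_mul {f g : (Fin 2 → ℝ) → ℝ} {x : Fin 2 → ℝ} (hf : DifferentiableAt ℝ f x)
    (hg : DifferentiableAt ℝ g x) (i : Fin 2) :
    pd i (fun y => f y * g y) x = pd i f x * g x + f x * pd i g x := by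
  simp only [pd, fderiv_fun_mul hf hg]
  simp
  ring

lemma pd_const_mul {g : (Fin 2 → ℝ) → ℝ} {x : Fin 2 → ℝ} (c : ℝ)
    (hg : DifferentiableAt ℝ g x) (i : Fin 2) :
    pd i (fun y => c * g y) x = c * pd i g x := by
  simp only [pd, fderiv_const_mul hg]
  simp

lemma pd_sub {f g : (Fin 2 → ℝ) → ℝ} {x : Fin 2 → ℝ} (hf : DifferentiableAt ℝ f x)
    (hg : DifferentiableAt ℝ g x) (i : Fin 2) :
    pd i (fun y => f y - g y) x = pd i f x - pd i g x := by
  simp only [pd, fderiv_fun_sub hf hg]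
  simp

lemma pd_sq {f : (Fin 2 → ℝ) → ℝ} {x : Fin 2 → ℝ} (hf : DifferentiableAt ℝ f x)
    (i : Fin 2) :
    pd i (fun y => f y ^ 2) x = 2 * f x * pd i f x := by
  have : (fun y => f y ^ 2) = fun y => f y * f y := by funext y; ring
  rw [this, pd_mul hf hf]; ring

/-- For smooth `ϱ : ℝ² → ℝ`, the vector field
`Y = Y¹∂ₓ + Y²∂_y` with
`Y¹ = ϱ(ϱ_yy ϱ_xxy − 2 ϱ_xy ϱ_xyy + ϱ_xx ϱ_yyy)`,
`Y² = −ϱ(ϱ_yy ϱ_xxx − 2 ϱ_xy ϱ_xxy + ϱ_xx ϱ_xyy)`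
satisfies `2·Y = X_H`, the Hamiltonian vector field of
`H = 2(ϱ_xx ϱ_yy − ϱ_xy²)` with respect to `P = ϱ ∂ₓ ∧ ∂_y`:
at every point, `2Y¹ = ϱ·∂_y H` and `2Y² = −ϱ·∂ₓ H`. -/
theorem homogeneous_cocycle_is_hamiltonian_2d
    (ϱ : (Fin 2 → ℝ) → ℝ) (hϱ : ContDiff ℝ (⊤ : ℕ∞) ϱ)
    (Y1 Y2 H : (Fin 2 → ℝ) → ℝ)
    (hY1 : Y1 = fun x => ϱ x *
      (pd 1 (pd 1 ϱ) x * pd 0 (pd 0 (pd 1 ϱ)) x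
        - 2 * pd 0 (pd 1 ϱ) x * pd 0 (pd 1 (pd 1 ϱ)) x
        + pd 0 (pd 0 ϱ) x * pd 1 (pd 1 (pd 1 ϱ)) x))
    (hY2 : Y2 = fun x => -(ϱ x) *
      (pd 1 (pd 1 ϱ) x * pd 0 (pd 0 (pd 0 ϱ)) x
        - 2 * pd 0 (pd 1 ϱ) x * pd 0 (pd 0 (pd 1 ϱ)) x
        + pd 0 (pd 0 ϱ) x * pd 0 (pd 1 (pd 1 ϱ)) x))
    (hH : H = fun x =>
      2 * (pd 0 (pd 0 ϱ) x * pd 1 (pd 1 ϱ) x - (pd 0 (pd 1 ϱ) x) ^ 2)) :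
    ∀ x, 2 * Y1 x = ϱ x * pd 1 H x ∧ 2 * Y2 x = -(ϱ x * pd 0 H x) := by
  intro x
  set a := pd 0 (pd 0 ϱ) with ha
  set b := pd 1 (pd 1 ϱ) with hb
  set c := pd 0 (pd 1 ϱ) with hc
  have hac : ContDiff ℝ (⊤ : ℕ∞) a := pd_contDiff (pd_contDiff hϱ 0) 0
  have hbc : ContDiff ℝ (⊤ : ℕ∞) b := pd_contDiff (pd_contDiff hϱ 1) 1
  have hcc : ContDiff ℝ (⊤ : ℕ∞) c := pd_contDiff (pd_contDiff hϱ 1) 0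
  have hda : DifferentiableAt ℝ a x := (hac.differentiable (by simp)) x
  have hdb : DifferentiableAt ℝ b x := (hbc.differentiable (by simp)) x
  have hdc : DifferentiableAt ℝ c x := (hcc.differentiable (by simp)) x
  have hdab : DifferentiableAt ℝ (fun y => a y * b y) x := hda.mul hdb
  have hdc2 : DifferentiableAt ℝ (fun y => c y ^ 2) x := hdc.pow 2
  have hpdH : ∀ i : Fin 2,
      pd i H x = 2 * (pd i a x * b x + a x * pd i b x - 2 * c x * pd i c x) := by
    intro i
    rw [hH, pd_const_mul 2 (show DifferentiableAt ℝ (fun y => a y * b y - c y ^ 2) x from hdab.sub hdc2) i, pd_sub hdab hdc2 i, pd_mul hda hdb i,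
      pd_sq hdc i]
  -- commuting identities
  have h1a : pd 1 a = pd 0 (pd 0 (pd 1 ϱ)) := by
    rw [ha, pd_comm (pd_contDiff hϱ 0) 1 0, pd_comm hϱ 1 0]
  have h1c : pd 1 c = pd 0 (pd 1 (pd 1 ϱ)) := by
    rw [hc, pd_comm (pd_contDiff hϱ 1) 1 0]
  have h0a : pd 0 a = pd 0 (pd 0 (pd 0 ϱ)) := rfl
  have h0b : pd 0 b = pd 0 (pd 1 (pd 1 ϱ)) := rfl
  have h0c : pd 0 c = pd 0 (pd 0 (pd 1 ϱ)) := rfl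
  constructor
  · rw [hY1, hpdH 1, h1a, h1c]
    show 2 * (ϱ x * (b x * pd 0 (pd 0 (pd 1 ϱ)) x - 2 * c x * pd 0 (pd 1 (pd 1 ϱ)) x
      + a x * pd 1 b x)) = _
    ring
  · rw [hY2, hpdH 0, h0a, h0b, h0c]
    show 2 * (-(ϱ x) * (b x * pd 0 (pd 0 (pd 0 ϱ)) x - 2 * c x * pd 0 (pd 0 (pd 1 ϱ)) x
      + a x * pd 0 (pd 1 (pd 1 ϱ)) x)) = _
    ring
end

section
/- For a smooth function ϱ : ℝ² → ℝ and a free index i ∈ {1,2}, define the three vector fields Φ₁₁ⁱ = Σ ε^{i i₂} ε^{j₁ j₂} ε^{k₁ k₂} (∂_{i₂}∂_{j₁}∂_{k₁}ϱ)(∂_{j₂}ϱ)(∂_{k₂}ϱ), Φ₁₂ⁱ = Σ ε^{i i₂} ε^{j₁ j₂} ε^{k₁ k₂} (∂_{j₁}∂_{k₁}ϱ)(∂_{i₂}∂_{j₂}ϱ)(∂_{k₂}ϱ), and Φ₃ⁱ = Σ ε^{i i₂} ε^{j₁ j₂} ε^{k₁ k₂} ϱ (∂_{j₁}∂_{k₁}ϱ)(∂_{i₂}∂_{j₂}∂_{k₂}ϱ),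 the sums running over all indices i₂, j₁, j₂, k₁, k₂ ∈ {1,2}. Suppose a, b, c ∈ ℝ are such that for every smooth ϱ : ℝ² → ℝ the vector field W = a·Φ₁₁ + b·Φ₁₂ + c·Φ₃ satisfies the Poisson-cocycle equation W¹ϱ_{x} + W²ϱ_{y} − ϱ(∂_x W¹ + ∂_y W²) = 0 identically on ℝ². Then a = 0 and b = 0. (Thus, up to nonzero constant multiples, Φ₃ is the unique vector field represented by Kontsevich graphs with [[ϱ∂_x∧∂_y, ·]] = 0.) -/
/-- The two-index Levi-Civita symbol: `ε⁰¹ = 1 = −ε¹⁰`, `ε⁰⁰ = ε¹¹ = 0`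
(indices `1, 2` of the paper are `0, 1` here). -/
def eps (i j : Fin 2) : ℝ := (j : ℝ) - (i : ℝ)

/-- `φ(Γ₁₁^{2D})`, the graph vector field of the Kontsevich graph `[0,1;1,3;1,2]`:
`Φ₁₁ⁱ = Σ ε^{i i₂} ε^{j₁ j₂} ε^{k₁ k₂} (∂_{i₂}∂_{j₁}∂_{k₁}ϱ)(∂_{j₂}ϱ)(∂_{k₂}ϱ)`. -/
noncomputable def Phi11 (ϱ : (Fin 2 → ℝ) → ℝ) (i : Fin 2) (x : Fin 2 → ℝ) : ℝ :=
  ∑ i₂ : Fin 2, ∑ j₁ : Fin 2, ∑ j₂ : Fin 2, ∑ k₁ : Fin 2, ∑ k₂ : Fin 2,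
    eps i i₂ * eps j₁ j₂ * eps k₁ k₂ *
      (pd i₂ (pd j₁ (pd k₁ ϱ)) x * pd j₂ ϱ x * pd k₂ ϱ x)

/-- `φ(Γ₁₂^{2D})`, the graph vector field of the Kontsevich graph `[0,3;1,3;1,2]`:
`Φ₁₂ⁱ = Σ ε^{i i₂} ε^{j₁ j₂} ε^{k₁ k₂} (∂_{j₁}∂_{k₁}ϱ)(∂_{i₂}∂_{j₂}ϱ)(∂_{k₂}ϱ)`. -/
noncomputable def Phi12 (ϱ : (Fin 2 → ℝ) → ℝ) (i : Fin 2) (x : Fin 2 → ℝ) : ℝ :=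
  ∑ i₂ : Fin 2, ∑ j₁ : Fin 2, ∑ j₂ : Fin 2, ∑ k₁ : Fin 2, ∑ k₂ : Fin 2,
    eps i i₂ * eps j₁ j₂ * eps k₁ k₂ *
      (pd j₁ (pd k₁ ϱ) x * pd i₂ (pd j₂ ϱ) x * pd k₂ ϱ x)

/-- `φ(Γ₃^{2D})`, the graph vector field of the Kontsevich graph `[0,3;2,3;2,3]`:
`Φ₃ⁱ = Σ ε^{i i₂} ε^{j₁ j₂} ε^{k₁ k₂} ϱ (∂_{j₁}∂_{k₁}ϱ)(∂_{i₂}∂_{j₂}∂_{k₂}ϱ)`. -/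
noncomputable def Phi3 (ϱ : (Fin 2 → ℝ) → ℝ) (i : Fin 2) (x : Fin 2 → ℝ) : ℝ :=
  ∑ i₂ : Fin 2, ∑ j₁ : Fin 2, ∑ j₂ : Fin 2, ∑ k₁ : Fin 2, ∑ k₂ : Fin 2,
    eps i i₂ * eps j₁ j₂ * eps k₁ k₂ *
      (ϱ x * pd j₁ (pd k₁ ϱ) x * pd i₂ (pd j₂ (pd k₂ ϱ)) x)

def monomial (d : ℝ) (m n : ℕ) : (Fin 2 → ℝ) → ℝ := fun y => d * (y 0 ^ m * y 1 ^ n)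

noncomputable def graphField (a b c : ℝ) (ϱ : (Fin 2 → ℝ) → ℝ) (i : Fin 2) :
    (Fin 2 → ℝ) → ℝ :=
  fun y => a * Phi11 ϱ i y + b * Phi12 ϱ i y + c * Phi3 ϱ i y

noncomputable def cocycleDefect (ϱ : (Fin 2 → ℝ) → ℝ) (W : Fin 2 → (Fin 2 → ℝ) → ℝ)
    (x : Fin 2 → ℝ) : ℝ :=
  W 0 x * pd 0 ϱ x + W 1 x * pd 1 ϱ x - ϱ x * (pd 0 (W 0) x + pd 1 (W 1) x)

lemma contDiff_monomial (d : ℝ) (m n : ℕ) : ContDiff ℝ (⊤ : ℕ∞) (monomial d m n) := by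
  unfold monomial
  fun_prop

lemma fderiv_monomial_apply (d : ℝ) (m n : ℕ) (x v : Fin 2 → ℝ) :
    fderiv ℝ (monomial d m n) x v =
      d * (m * x 0 ^ (m - 1) * v 0 * x 1 ^ n + x 0 ^ m * (n * x 1 ^ (n - 1) * v 1)) := by
  have hpow (j : Fin 2) (k : ℕ) : HasFDerivAt (fun y : Fin 2 → ℝ => y j ^ k)
      ((k * x j ^ (k - 1)) • ContinuousLinearMap.proj (R := ℝ) (φ := fun _ => ℝ) j) x :=
    (hasDerivAt_pow k (x j)).comp_hasFDerivAt x (hasFDerivAt_apply j x)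
  have hmono : HasFDerivAt (monomial d m n) _ x := ((hpow 0 m).mul (hpow 1 n)).const_mul d
  rw [hmono.fderiv]
  simp only [smul_apply, add_apply, ContinuousLinearMap.proj_apply, smul_eq_mul]
  ring

lemma pd_zero_monomial (d : ℝ) (m n : ℕ) :
    pd 0 (monomial d m n) = monomial (d * m) (m - 1) n := by
  funext x
  simp [pd, monomial, fderiv_monomial_apply]
  ring

lemma pd_one_monomial (d : ℝ) (m n : ℕ) :
    pd 1 (monomial d m n) = monomial (d * n) m (n - 1) := by
  funext x
  simp [pd, monomial, fderiv_monomial_apply]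
  ring

lemma eps_values : eps 0 0 = 0 ∧ eps 0 1 = 1 ∧ eps 1 0 = -1 ∧ eps 1 1 = 0 := by
  norm_num [eps]

lemma graphField_x2y (a b c : ℝ) :
    graphField a b c (monomial 1 2 1) 0 = monomial (2 * a - 4 * b) 4 0 ∧
      graphField a b c (monomial 1 2 1) 1 = monomial (8 * (a + b + c)) 3 1 := by
  obtain ⟨h00, h01, h10, h11⟩ := eps_values
  constructor <;> funext y <;>
    simp only [graphField, Phi11, Phi12, Phi3, Fin.sum_univ_two, pd_zero_monomial,
      pd_one_monomial, h00, h01, h10, h11] <;>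
    simp [monomial] <;>
    ring

lemma graphField_x2y3 (a b c : ℝ) :
    graphField a b c (monomial 1 2 3) 0 = monomial (-66 * a - 72 * b - 96 * c) 4 6 ∧
      graphField a b c (monomial 1 2 3) 1 = monomial (24 * a + 48 * b + 48 * c) 3 7 := by
  obtain ⟨h00, h01, h10, h11⟩ := eps_values
  constructor <;> funext y <;>
    simp only [graphField, Phi11, Phi12, Phi3, Fin.sum_univ_two, pd_zero_monomial,
      pd_one_monomial, h00, h01, h10, h11] <;>
    simp [monomial] <;>
    ring

lemma cocycleDefect_monomial {W : Fin 2 → (Fin 2 → ℝ) → ℝ} {α β : ℝ} {m n p q : ℕ}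
    (hW₀ : W 0 = monomial α (p + 1) q) (hW₁ : W 1 = monomial β p (q + 1)) (x : Fin 2 → ℝ) :
    cocycleDefect (monomial 1 (m + 1) (n + 1)) W x =
      (α * (m - p) + β * (n - q)) * (x 0 ^ (p + m + 1) * x 1 ^ (q + n + 1)) := by
  simp [cocycleDefect, hW₀, hW₁, pd_zero_monomial, pd_one_monomial, monomial]
  ring

/-- If `a, b, c ∈ ℝ` are such that for every smooth `ϱ : ℝ² → ℝ` the vector field
`W = a·Φ₁₁ + b·Φ₁₂ + c·Φ₃` satisfies the Poisson-cocycle equation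
`W¹ϱ_x + W²ϱ_y − ϱ(∂ₓW¹ + ∂_yW²) = 0` identically on `ℝ²`, then `a = 0` and `b = 0`:
up to nonzero constant multiples, `Φ₃` is the unique graph vector field `Y`
with `[[ϱ∂ₓ∧∂_y, Y]] = 0`. -/
theorem uniqueness_of_homogeneous_solution_2d (a b c : ℝ)
    (h : ∀ ϱ : (Fin 2 → ℝ) → ℝ, ContDiff ℝ (⊤ : ℕ∞) ϱ →
      ∀ x : Fin 2 → ℝ,
        (a * Phi11 ϱ 0 x + b * Phi12 ϱ 0 x + c * Phi3 ϱ 0 x) * pd 0 ϱ x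
          + (a * Phi11 ϱ 1 x + b * Phi12 ϱ 1 x + c * Phi3 ϱ 1 x) * pd 1 ϱ x
          - ϱ x *
            (pd 0 (fun y => a * Phi11 ϱ 0 y + b * Phi12 ϱ 0 y + c * Phi3 ϱ 0 y) x
              + pd 1 (fun y => a * Phi11 ϱ 1 y + b * Phi12 ϱ 1 y + c * Phi3 ϱ 1 y) x) = 0) :
    a = 0 ∧ b = 0 := by
  obtain ⟨hx2y₀, hx2y₁⟩ := graphField_x2y a b c
  obtain ⟨hx2y3₀, hx2y3₁⟩ := graphField_x2y3 a b c
  have hx2y : cocycleDefect (monomial 1 2 1) (graphField a b c (monomial 1 2 1)) 1 = 0 :=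
    h _ (contDiff_monomial 1 2 1) 1
  have hx2y3 : cocycleDefect (monomial 1 2 3) (graphField a b c (monomial 1 2 3)) 1 = 0 :=
    h _ (contDiff_monomial 1 2 3) 1
  have hab : a = 2 * b := by
    rw [cocycleDefect_monomial hx2y₀ hx2y₁] at hx2y
    norm_num at hx2y
    linarith
  have hab' : 3 * a = 4 * b := by
    rw [cocycleDefect_monomial hx2y3₀ hx2y3₁] at hx2y3
    norm_num at hx2y3
    linarith
  constructor <;> linarith
end

section
/- For every smooth ϱ : ℝ² → ℝ and every i ∈ {1,2}, Σ ε^{i i₂} ε^{j₁ j₂} ε^{k₁ k₂} (∂_{i₂}ϱ)(∂_{j₁}∂_{k₁}ϱ)(∂_{j₂}∂_{k₂}ϱ) = 2 · Σ ε^{i i₂} ε^{j₁ j₂} ε^{k₁ k₂} (∂_{j₁}∂_{k₁}ϱ)(∂_{i₂}∂_{j₂}ϱ)(∂_{k₂}ϱ), both sums running over all i₂, j₁, j₂, k₁, k₂ ∈ {1,2}. Equivalently, φ(Γ₈^{2D}) = 2·φ(Γ₁₂^{2D}): the Kontsevich graphs encoded [0,3;1,2;1,2] and [0,3;1,3;1,2]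 are synonyms with coefficient 2. -/
/-- For every smooth `ϱ : ℝ² → ℝ` and every free index `i`,
`Σ ε^{i i₂} ε^{j₁ j₂} ε^{k₁ k₂} (∂_{i₂}ϱ)(∂_{j₁}∂_{k₁}ϱ)(∂_{j₂}∂_{k₂}ϱ)
 = 2 · Σ ε^{i i₂} ε^{j₁ j₂} ε^{k₁ k₂} (∂_{j₁}∂_{k₁}ϱ)(∂_{i₂}∂_{j₂}ϱ)(∂_{k₂}ϱ)`,
i.e. `φ(Γ₈^{2D}) = 2·φ(Γ₁₂^{2D})`: the Kontsevich graphs `[0,3;1,2;1,2]` and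
`[0,3;1,3;1,2]` are synonyms with coefficient `2`. -/
theorem synonym_gamma8_eq_two_gamma12
    (ϱ : (Fin 2 → ℝ) → ℝ) (hϱ : ContDiff ℝ (⊤ : ℕ∞) ϱ) :
    ∀ i : Fin 2, ∀ x : Fin 2 → ℝ,
      (∑ i₂ : Fin 2, ∑ j₁ : Fin 2, ∑ j₂ : Fin 2, ∑ k₁ : Fin 2, ∑ k₂ : Fin 2,
        eps i i₂ * eps j₁ j₂ * eps k₁ k₂ *
          (pd i₂ ϱ x * pd j₁ (pd k₁ ϱ) x * pd j₂ (pd k₂ ϱ) x)) =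
      2 * ∑ i₂ : Fin 2, ∑ j₁ : Fin 2, ∑ j₂ : Fin 2, ∑ k₁ : Fin 2, ∑ k₂ : Fin 2,
        eps i i₂ * eps j₁ j₂ * eps k₁ k₂ *
          (pd j₁ (pd k₁ ϱ) x * pd i₂ (pd j₂ ϱ) x * pd k₂ ϱ x) := by
  intro i x
  have hd : Differentiable ℝ ϱ := hϱ.differentiable (by simp)
  have hf' : ∀ y, HasFDerivAt ϱ (fderiv ℝ ϱ y) y := fun y => (hd y).hasFDerivAt
  have hd2 : ContDiff ℝ (⊤ : ℕ∞) (fderiv ℝ ϱ) := (hϱ.fderiv_right (by exact_mod_cast le_top))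
  have hx : HasFDerivAt (fderiv ℝ ϱ) (fderiv ℝ (fderiv ℝ ϱ) x) x :=
    ((hd2.differentiable (by simp)) x).hasFDerivAt
  have key : ∀ a b : Fin 2, pd a (pd b ϱ) x =
      fderiv ℝ (fderiv ℝ ϱ) x (Pi.single a 1) (Pi.single b 1) := by
    intro a b
    have h : HasFDerivAt (fun y => fderiv ℝ ϱ y (Pi.single b 1))
        ((ContinuousLinearMap.apply ℝ ℝ ((Pi.single b 1 : Fin 2 → ℝ))).comp
          (fderiv ℝ (fderiv ℝ ϱ) x)) x :=
      (ContinuousLinearMap.apply ℝ ℝ ((Pi.single b 1 : Fin 2 → ℝ))).hasFDerivAt.comp x hx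
    unfold pd
    rw [h.fderiv]
    simp
  have hsym : ∀ a b : Fin 2, pd a (pd b ϱ) x = pd b (pd a ϱ) x := by
    intro a b
    rw [key, key]
    exact second_derivative_symmetric hf' hx _ _
  have h01 := hsym 0 1
  simp only [Fin.sum_univ_two, eps]
  norm_num
  ring_nf
  rw [h01]
  ring
end

section
/- For every smooth ϱ : ℝ² → ℝ and every i ∈ {1,2}, Σ ε^{i i₂} ε^{j₁ j₂} ε^{k₁ k₂} (∂_{k₁}ϱ)(∂_{i₂}∂_{j₁}∂_{k₂}ϱ)(∂_{j₂}ϱ) = − Σ ε^{i i₂} ε^{j₁ j₂} ε^{k₁ k₂} (∂_{i₂}∂_{j₁}∂_{k₁}ϱ)(∂_{j₂}ϱ)(∂_{k₂}ϱ), both sums running over all i₂, j₁, j₂, k₁, k₂ ∈ {1,2}. Equivalently, φ(Γ₉^{2D}) = −φ(Γ₁₁^{2D}): the Kontsevich graphs encoded [0,2;2,3;1,2] and [0,1;1,3;1,2] are synonyms with coefficient −1. -/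
/-!
The identity is purely combinatorial: relabelling the summation indices `k₁ ↔ k₂` on the
left-hand side and using `ε^{k₂ k₁} = -ε^{k₁ k₂}` turns it into the right-hand side. No
symmetry of mixed partials is involved, so any antisymmetric `ε` and any arrays of first
and third derivatives will do.
-/

open Finset

theorem eps_swap (i j : Fin 2) : eps j i = -eps i j := by
  simp only [eps]; ring

theorem sum_antisymm_gamma9_eq_neg_gamma11 {ι R : Type*} [Fintype ι] [CommRing R]
    (e : ι → ι → R) (he : ∀ a b, e b a = -e a b) (v : ι → R) (A : ι → ι → ι → R) (i : ι) :
    ∑ i₂, ∑ j₁, ∑ j₂, ∑ k₁, ∑ k₂,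
        e i i₂ * e j₁ j₂ * e k₁ k₂ * (v k₁ * A i₂ j₁ k₂ * v j₂) =
      -∑ i₂, ∑ j₁, ∑ j₂, ∑ k₁, ∑ k₂,
        e i i₂ * e j₁ j₂ * e k₁ k₂ * (A i₂ j₁ k₁ * v j₂ * v k₂) := by
  simp only [← sum_neg_distrib]
  refine sum_congr rfl fun i₂ _ => sum_congr rfl fun j₁ _ => sum_congr rfl fun j₂ _ => ?_
  rw [sum_comm]
  exact sum_congr rfl fun k₂ _ => sum_congr rfl fun k₁ _ => by rw [he k₂ k₁]; ring

theorem synonym_gamma9_eq_neg_gamma11_general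
    (ϱ : (Fin 2 → ℝ) → ℝ) :
    ∀ i : Fin 2, ∀ x : Fin 2 → ℝ,
      (∑ i₂ : Fin 2, ∑ j₁ : Fin 2, ∑ j₂ : Fin 2, ∑ k₁ : Fin 2, ∑ k₂ : Fin 2,
        eps i i₂ * eps j₁ j₂ * eps k₁ k₂ *
          (pd k₁ ϱ x * pd i₂ (pd j₁ (pd k₂ ϱ)) x * pd j₂ ϱ x)) =
      -∑ i₂ : Fin 2, ∑ j₁ : Fin 2, ∑ j₂ : Fin 2, ∑ k₁ : Fin 2, ∑ k₂ : Fin 2,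
        eps i i₂ * eps j₁ j₂ * eps k₁ k₂ *
          (pd i₂ (pd j₁ (pd k₁ ϱ)) x * pd j₂ ϱ x * pd k₂ ϱ x) := fun i x =>
  sum_antisymm_gamma9_eq_neg_gamma11 eps eps_swap (fun k => pd k ϱ x)
    (fun a b c => pd a (pd b (pd c ϱ)) x) i

/-- For every smooth `ϱ : ℝ² → ℝ` and every free index `i`,
`Σ ε^{i i₂} ε^{j₁ j₂} ε^{k₁ k₂} (∂_{k₁}ϱ)(∂_{i₂}∂_{j₁}∂_{k₂}ϱ)(∂_{j₂}ϱ)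
 = − Σ ε^{i i₂} ε^{j₁ j₂} ε^{k₁ k₂} (∂_{i₂}∂_{j₁}∂_{k₁}ϱ)(∂_{j₂}ϱ)(∂_{k₂}ϱ)`,
i.e. `φ(Γ₉^{2D}) = −φ(Γ₁₁^{2D})`: the Kontsevich graphs `[0,2;2,3;1,2]` and
`[0,1;1,3;1,2]` are synonyms with coefficient `−1`. -/
theorem synonym_gamma9_eq_neg_gamma11
    (ϱ : (Fin 2 → ℝ) → ℝ) (hϱ : ContDiff ℝ (⊤ : ℕ∞) ϱ) :
    ∀ i : Fin 2, ∀ x : Fin 2 → ℝ,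
      (∑ i₂ : Fin 2, ∑ j₁ : Fin 2, ∑ j₂ : Fin 2, ∑ k₁ : Fin 2, ∑ k₂ : Fin 2,
        eps i i₂ * eps j₁ j₂ * eps k₁ k₂ *
          (pd k₁ ϱ x * pd i₂ (pd j₁ (pd k₂ ϱ)) x * pd j₂ ϱ x)) =
      -∑ i₂ : Fin 2, ∑ j₁ : Fin 2, ∑ j₂ : Fin 2, ∑ k₁ : Fin 2, ∑ k₂ : Fin 2,
        eps i i₂ * eps j₁ j₂ * eps k₁ k₂ *
          (pd i₂ (pd j₁ (pd k₁ ϱ)) x * pd j₂ ϱ x * pd k₂ ϱ x) :=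
  synonym_gamma9_eq_neg_gamma11_general ϱ
end
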